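/- arXiv:math/0403198 — 4 statements merged into one kernel-verified Lean document; each statement's English description precedes it below -/
import Mathlib

section
/- Let p be a prime or p = ∞. Assume E[|log|a₁|_p|] < ∞, E[log⁺|b₁|_p] < ∞, and φ_p = E[log|a₁|_p] < 0; let Z_∞^p be the almost sure limit in ℚ_p of Σ_{k=1}^n a₁⋯a_{k−1} b_k, and let ν_p be the law of Z_∞^p. Then almost surely, for every bounded continuous function f : ℚ_p → ℝ, ∫_{ℚ_p} f(A_n z + B_n) dν_p(z) → f(Z_∞^p) as n → ∞; that is, the image measures x_n ν_p converge weakly to the Dirac measure at Z_∞^p almost surely. -/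
open MeasureTheory ProbabilityTheory Filter Topology Finset

/-!
By the strong law of large numbers `Σ_{k<n} log ‖a_k‖` drifts to `-∞`, and `‖A_n‖` is at most its
exponential, so `A_n → 0`.
Hence for every fixed `z` the affine image `A_n z + B_n` tends to `Z_∞`, and dominated convergence
with the constant bound of `f` carries this through the integral against the probability measure `ν`.
-/

theorem ae_tendsto_sum_atBot_of_integral_neg {Ω : Type*} [MeasureSpace Ω]
    (X : ℕ → Ω → ℝ) (hint : Integrable (X 0))
    (hindep : Pairwise (Function.onFun (IndepFun · · ℙ) X)) (hident : ∀ i, IdentDistrib (X i) (X 0))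
    (hneg : 𝔼[X 0] < 0) :
    ∀ᵐ ω, Tendsto (fun n => ∑ i ∈ range n, X i ω) atTop atBot := by
  filter_upwards [strong_law_ae_real X hint hindep hident] with ω hmean
  have hscaled : Tendsto (fun n : ℕ => (∑ i ∈ range n, X i ω) / n * n) atTop atBot :=
    hmean.neg_mul_atTop hneg tendsto_natCast_atTop_atTop
  refine hscaled.congr' ?_
  filter_upwards [eventually_ne_atTop 0] with n hn
  field_simp

theorem tendsto_prod_zero_of_tendsto_sum_log_norm_atBot {R : Type*} [NormedCommRing R]
    [NormOneClass R] (x : ℕ → R)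
    (h : Tendsto (fun n => ∑ k ∈ range n, Real.log ‖x k‖) atTop atBot) :
    Tendsto (fun n => ∏ k ∈ range n, x k) atTop (𝓝 0) := by
  rw [tendsto_zero_iff_norm_tendsto_zero]
  refine squeeze_zero (fun _ => norm_nonneg _) (fun n => ?_) (Real.tendsto_exp_atBot.comp h)
  calc ‖∏ k ∈ range n, x k‖ ≤ ∏ k ∈ range n, ‖x k‖ := Finset.norm_prod_le _ _
    _ ≤ ∏ k ∈ range n, Real.exp (Real.log ‖x k‖) :=
      prod_le_prod (fun _ _ => norm_nonneg _) fun k _ => Real.le_exp_log _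
    _ = Real.exp (∑ k ∈ range n, Real.log ‖x k‖) := (Real.exp_sum _ _).symm

theorem tendsto_integral_comp_mul_add_of_tendsto {R ι : Type*} [Semiring R] [TopologicalSpace R]
    [IsTopologicalSemiring R] [MeasurableSpace R] [OpensMeasurableSpace R]
    (ν : Measure R) [IsProbabilityMeasure ν] {l : Filter ι} [l.IsCountablyGenerated]
    {A B : ι → R} {w : R} (hA : Tendsto A l (𝓝 0)) (hB : Tendsto B l (𝓝 w))
    {f : R → ℝ} (hf : Continuous f) {C : ℝ} (hC : ∀ x, |f x| ≤ C) :
    Tendsto (fun n => ∫ z, f (A n * z + B n) ∂ν) l (𝓝 (f w)) := by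
  have hlim : ∀ z, Tendsto (fun n => A n * z + B n) l (𝓝 w) := fun z => by
    simpa using (hA.mul_const z).add hB
  have hdom := tendsto_integral_filter_of_dominated_convergence (μ := ν) (fun _ => C)
    (Eventually.of_forall fun n =>
      (hf.comp ((continuous_const.mul continuous_id).add continuous_const)).aestronglyMeasurable)
    (Eventually.of_forall fun n => ae_of_all _ fun z => (hC _ : |f (A n * z + B n)| ≤ C))
    (integrable_const C) (ae_of_all _ fun z => (hf.tendsto w).comp (hlim z))
  simpa using hdom

theorem statement2_general
    {Ω : Type*} [MeasureSpace Ω] [IsProbabilityMeasure (ℙ : Measure Ω)]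
    (a b : ℕ → Ω → ℚ)
    (hmeas : ∀ n, Measurable fun ω => (a n ω, b n ω))
    (hindep : iIndepFun (fun n ω => (a n ω, b n ω)) ℙ)
    (hident : ∀ n, IdentDistrib (fun ω => (a n ω, b n ω)) (fun ω => (a 0 ω, b 0 ω)) ℙ ℙ)
    {K : Type*} [NormedField K] [MeasurableSpace K] [BorelSpace K]
    (ι : ℚ →+* K)
    (hInta : Integrable (fun ω => Real.log ‖ι (a 0 ω)‖) ℙ)
    (hdrift : ∫ ω, Real.log ‖ι (a 0 ω)‖ ∂ℙ < 0)
    (Z : Ω → K)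
    (hZ : ∀ᵐ ω ∂ℙ,
      Tendsto (fun n => ι (∑ k ∈ Finset.range n, (∏ j ∈ Finset.range k, a j ω) * b k ω))
        atTop (𝓝 (Z ω))) :
    ∀ᵐ ω ∂ℙ, ∀ f : K → ℝ, Continuous f → (∃ C, ∀ x, |f x| ≤ C) →
      Tendsto (fun n =>
          ∫ z, f (ι (∏ k ∈ Finset.range n, a k ω) * z
              + ι (∑ k ∈ Finset.range n, (∏ j ∈ Finset.range k, a j ω) * b k ω))
            ∂(Measure.map Z ℙ))
        atTop (𝓝 (f (Z ω))) := by
  have hlog_meas : Measurable fun p : ℚ × ℚ => Real.log ‖ι p.1‖ :=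
    (measurable_from_top (f := fun q : ℚ => Real.log ‖ι q‖)).comp measurable_fst
  have hdrift_ae := ae_tendsto_sum_atBot_of_integral_neg (fun n ω => Real.log ‖ι (a n ω)‖) hInta
    (fun i j hij => (hindep.comp _ fun _ => hlog_meas).indepFun hij)
    (fun n => (hident n).comp hlog_meas) hdrift
  have hB_meas : ∀ n, Measurable fun ω =>
      ι (∑ k ∈ range n, (∏ j ∈ range k, a j ω) * b k ω) := fun n =>
    measurable_from_top.comp <| Finset.measurable_sum _ fun k _ =>
      (Finset.measurable_prod _ fun j _ => measurable_fst.comp (hmeas j)).mul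
        (measurable_snd.comp (hmeas k))
  have hZ_meas : AEMeasurable Z ℙ :=
    aemeasurable_of_tendsto_metrizable_ae _ (fun n => (hB_meas n).aemeasurable) hZ
  have : IsProbabilityMeasure (Measure.map Z ℙ) := Measure.isProbabilityMeasure_map hZ_meas
  filter_upwards [hdrift_ae, hZ] with ω hlog hB f hf ⟨C, hC⟩
  have hA : Tendsto (fun n => ι (∏ k ∈ range n, a k ω)) atTop (𝓝 0) := by
    simpa only [map_prod] using
      tendsto_prod_zero_of_tendsto_sum_log_norm_atBot (fun k => ι (a k ω)) hlog
  exact tendsto_integral_comp_mul_add_of_tendsto _ hA hB hf hC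

/-- With `K` a complete normed field realizing a place of `ℚ`
(a prime `p` or `p = ∞`) and `(aₙ, bₙ)` i.i.d. in `ℚ* × ℚ`, assume
`E[|log |a₁|_p|] < ∞`, `E[log⁺ |b₁|_p] < ∞` and `φ_p = E[log |a₁|_p] < 0`; let
`Z_∞^p` be the a.s. limit of `B_n = Σ_{k=1}^n a₁⋯a_{k-1} b_k` in `ℚ_p` and let
`ν_p` be its law.  Then almost surely, for every bounded continuous `f : ℚ_p → ℝ`,
`∫ f(A_n z + B_n) dν_p(z) → f(Z_∞^p)`, i.e. `x_n ν_p` converges weakly to the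
Dirac measure at `Z_∞^p`. -/
theorem statement2
    {Ω : Type*} [MeasureSpace Ω] [IsProbabilityMeasure (ℙ : Measure Ω)]
    (a b : ℕ → Ω → ℚ)
    (hmeas : ∀ n, Measurable fun ω => (a n ω, b n ω))
    (hindep : iIndepFun (fun n ω => (a n ω, b n ω)) ℙ)
    (hident : ∀ n, IdentDistrib (fun ω => (a n ω, b n ω)) (fun ω => (a 0 ω, b 0 ω)) ℙ ℙ)
    (hne : ∀ n ω, a n ω ≠ 0)
    {K : Type*} [NormedField K] [CompleteSpace K] [MeasurableSpace K] [BorelSpace K]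
    (ι : ℚ →+* K) (hdense : DenseRange ι)
    (hplace : (∀ q : ℚ, ‖ι q‖ = |(q : ℝ)|) ∨
      ∃ p : ℕ, p.Prime ∧ ∀ q : ℚ, ‖ι q‖ = (padicNorm p q : ℝ))
    (hInta : Integrable (fun ω => Real.log ‖ι (a 0 ω)‖) ℙ)
    (hIntb : Integrable (fun ω => max (Real.log ‖ι (b 0 ω)‖) 0) ℙ)
    (hdrift : ∫ ω, Real.log ‖ι (a 0 ω)‖ ∂ℙ < 0)
    (Z : Ω → K)
    (hZ : ∀ᵐ ω ∂ℙ,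
      Tendsto (fun n => ι (∑ k ∈ Finset.range n, (∏ j ∈ Finset.range k, a j ω) * b k ω))
        atTop (𝓝 (Z ω))) :
    ∀ᵐ ω ∂ℙ, ∀ f : K → ℝ, Continuous f → (∃ C, ∀ x, |f x| ≤ C) →
      Tendsto (fun n =>
          ∫ z, f (ι (∏ k ∈ Finset.range n, a k ω) * z
              + ι (∑ k ∈ Finset.range n, (∏ j ∈ Finset.range k, a j ω) * b k ω))
            ∂(Measure.map Z ℙ))
        atTop (𝓝 (f (Z ω))) :=
  statement2_general a b hmeas hindep hident ι hInta hdrift Z hZ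
end

section
/- Let p be a prime or p = ∞, and let μ be a nondegenerate probability measure on ℚ* × ℚ. If ν is a μ-stationary probability measure on ℚ_p, then ν has no atoms: ν({z}) = 0 for every z ∈ ℚ_p. -/
/-!
Suppose `ν` has an atom. Since `ν` is finite, there is a largest atom mass `m`, attained on a
finite nonempty set `S`. Stationarity writes `ν {z}` as the `μ`-average of `ν (g⁻¹ {z})`, where
`g` runs over the affine maps; for `z ∈ S` this average of numbers `≤ m` equals `m`, so almost
every `g` maps `S` onto itself. Hence almost every `g` fixes the barycenter `c` of `S`. If some
such `g` has linear part `a ≠ 1`, then `c = b / (1 - a)` is rational and almost surely fixed,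
contradicting nondegeneracy; otherwise `a = 1` almost surely, contradicting it as well.
-/

open MeasureTheory Function

open scoped ENNReal

namespace MeasureTheory.Measure

variable {X : Type*} [MeasurableSpace X] [MeasurableSingletonClass X]
  (ν : Measure X) [IsFiniteMeasure ν]

theorem finite_setOf_le_measure_singleton {ε : ℝ≥0∞} (hε : ε ≠ 0) :
    {z : X | ε ≤ ν {z}}.Finite :=
  ν.finite_const_le_meas_of_disjoint_iUnion (pos_iff_ne_zero.mpr hε)
    (fun _ => measurableSet_singleton _)
    (fun _ _ h => Set.disjoint_singleton.mpr h) (measure_ne_top _ _)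

theorem exists_forall_measure_singleton_le {z : X} (hz : ν {z} ≠ 0) :
    ∃ z₁, ∀ w, ν {w} ≤ ν {z₁} := by
  obtain ⟨z₁, hz₁, hmax⟩ := Set.exists_max_image _ (fun w => ν {w})
    (ν.finite_setOf_le_measure_singleton hz) ⟨z, le_refl (ν {z})⟩
  refine ⟨z₁, fun w => ?_⟩
  by_cases hw : ν {z} ≤ ν {w}
  · exact hmax w hw
  · exact (not_le.mp hw).le.trans hz₁

end MeasureTheory.Measure

section Stationary

variable {α X : Type*} [MeasurableSpace α] [MeasurableSpace X]
  {μ : Measure α} [IsProbabilityMeasure μ] {ν : Measure X} [IsProbabilityMeasure ν]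
  {g : α → X → X}

theorem measure_eq_lintegral_measure_preimage [DiscreteMeasurableSpace α]
    (hg : ∀ x, Measurable (g x))
    (hstat : ∀ f : X → ℝ, Measurable f → (∃ C, ∀ x, |f x| ≤ C) →
      ∫ z, f z ∂ν = ∫ x, ∫ z, f (g x z) ∂ν ∂μ)
    {A : Set X} (hA : MeasurableSet A) :
    ν A = ∫⁻ x, ν (g x ⁻¹' A) ∂μ := by
  have hbdd : ∃ C, ∀ z, |A.indicator (1 : X → ℝ) z| ≤ C :=
    ⟨1, fun z => by by_cases hz : z ∈ A <;> simp [hz]⟩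
  have hind : ∀ x, (fun z => A.indicator (1 : X → ℝ) (g x z)) = (g x ⁻¹' A).indicator 1 :=
    fun x => funext fun z => (Set.indicator_comp_right (g x)).symm
  have hreal : ν.real A = ∫ x, ν.real (g x ⁻¹' A) ∂μ := by
    simpa only [integral_indicator_one hA, hind, integral_indicator_one (hg _ hA)] using
      hstat (A.indicator 1) (measurable_const.indicator hA) hbdd
  have hfin : ∫⁻ x, ν (g x ⁻¹' A) ∂μ ≠ ∞ :=
    ((lintegral_mono fun _ => prob_le_one).trans_lt (by simp)).ne
  simp only [measureReal_def] at hreal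
  rw [integral_toReal Measurable.of_discrete.aemeasurable
    (ae_of_all _ fun _ => measure_lt_top _ _)] at hreal
  exact (ENNReal.toReal_eq_toReal_iff' (measure_ne_top _ _) hfin).mp hreal

theorem ae_image_setOf_measure_singleton_eq [MeasurableSingletonClass X]
    (hstat : ∀ z, ν {z} = ∫⁻ x, ν (g x ⁻¹' {z}) ∂μ) (hinj : ∀ᵐ x ∂μ, (g x).Injective)
    {m : ℝ≥0∞} (hm : m ≠ 0) (hmax : ∀ w, ν {w} ≤ m) :
    ∀ᵐ x ∂μ, g x '' {w | ν {w} = m} = {w | ν {w} = m} := by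
  set S := {w | ν {w} = m}
  have hS : S.Finite := (ν.finite_setOf_le_measure_singleton hm).subset fun w hw => hw.ge
  have hpre : ∀ x, (g x).Injective → ∀ z, ν (g x ⁻¹' {z}) ≤ m := by
    intro x hx z
    rcases (Set.subsingleton_singleton.preimage hx).eq_empty_or_singleton with h | ⟨w, h⟩
    · rw [h, measure_empty]; exact zero_le
    · rw [h]; exact hmax w
  -- `x ↦ ν (g x ⁻¹' {z})` is bounded by `m` and has mean `ν {z} = m`, so it is `m` a.e.
  have hfull : ∀ z ∈ S, ∀ᵐ x ∂μ, ν (g x ⁻¹' {z}) = m := by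
    intro z hz
    refine ae_eq_of_ae_le_of_lintegral_le ?_ ?_ aemeasurable_const ?_
    · filter_upwards [hinj] with x hx using hpre x hx z
    · rw [← hstat]; exact measure_ne_top _ _
    · rw [← hstat, hz, lintegral_const, measure_univ, mul_one]
  filter_upwards [hS.eventually_all.mpr hfull, hinj] with x hx hxinj
  have hsub : S ⊆ g x '' S := by
    intro z hz
    rcases (Set.subsingleton_singleton.preimage hxinj).eq_empty_or_singleton with h | ⟨w, h⟩
    · exact absurd ((hx z hz).symm.trans (by rw [h, measure_empty])) hm
    · have hw : w ∈ g x ⁻¹' {z} := h ▸ rfl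
      exact ⟨w, (congrArg ν h).symm.trans (hx z hz), hw⟩
  exact (Set.eq_of_subset_of_ncard_le hsub (Set.ncard_image_of_injective S hxinj).le
    (hS.image _)).symm

end Stationary

theorem Finset.isFixedPt_sum_div_card_of_image_eq {K : Type*} [Field K] [DecidableEq K]
    {s : Finset K} (hs : (s.card : K) ≠ 0) {a b : K} (ha : a ≠ 0)
    (himg : s.image (fun w => a * w + b) = s) :
    IsFixedPt (fun w => a * w + b) ((∑ w ∈ s, w) / s.card) := by
  have hsum : ∑ w ∈ s, (a * w + b) = ∑ w ∈ s, w := by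
    conv_rhs => rw [← himg]
    exact (Finset.sum_image (f := id) fun _ _ _ _ h =>
      mul_left_cancel₀ ha (add_right_cancel h)).symm
  rw [Finset.sum_add_distrib, ← Finset.mul_sum, Finset.sum_const, nsmul_eq_mul] at hsum
  simp only [IsFixedPt]
  field_simp
  linear_combination hsum

theorem ae_fst_eq_one_or_exists_ae_isFixedPt {F K : Type*} [Field F] [MeasurableSpace F]
    [Field K] (ι : F →+* K) {μ : Measure (F × F)} {c : K}
    (hc : ∀ᵐ x ∂μ, IsFixedPt (fun w => ι x.1 * w + ι x.2) c) :
    (∀ᵐ x ∂μ, x.1 = 1) ∨ ∃ t : F, ∀ᵐ x ∂μ, IsFixedPt (fun w => x.1 * w + x.2) t := by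
  by_cases h : ∃ x : F × F, x.1 ≠ 1 ∧ IsFixedPt (fun w => ι x.1 * w + ι x.2) c
  · obtain ⟨x₀, hx₀, hfix⟩ := h
    simp only [IsFixedPt] at hfix
    have hsub : (1 : K) - ι x₀.1 ≠ 0 :=
      sub_ne_zero.mpr fun h => hx₀ (ι.injective ((map_one ι).trans h).symm)
    have hct : c = ι (x₀.2 / (1 - x₀.1)) := by
      rw [map_div₀, map_sub, map_one, eq_div_iff hsub]
      linear_combination -hfix
    refine Or.inr ⟨x₀.2 / (1 - x₀.1), ?_⟩
    filter_upwards [hc] with x hx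
    apply ι.injective
    rw [hct] at hx
    simpa only [IsFixedPt, map_add, map_mul] using hx
  · push Not at h
    left
    filter_upwards [hc] with x hx
    by_contra hx₁
    exact h x hx₁ hx

theorem statement4_general
    {K : Type*} [NormedField K] [MeasurableSpace K] [BorelSpace K]
    (ι : ℚ →+* K)
    (μ : Measure (ℚ × ℚ)) [IsProbabilityMeasure μ]
    (hμ0 : μ {x | x.1 = 0} = 0)
    (hnondeg₁ : μ {x | x.1 = 1} < 1)
    (hnondeg₂ : ∀ z : ℚ, μ {x | x.1 * z + x.2 = z} < 1)
    (ν : Measure K) [IsProbabilityMeasure ν]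
    (hstat : ∀ f : K → ℝ, Measurable f → (∃ C, ∀ x, |f x| ≤ C) →
      ∫ z, f z ∂ν = ∫ x, ∫ z, f (ι x.1 * z + ι x.2) ∂ν ∂μ) :
    ∀ z : K, ν {z} = 0 := by
  classical
  intro z₀
  by_contra hz₀
  set g : ℚ × ℚ → K → K := fun x w => ι x.1 * w + ι x.2
  have hunit : ∀ᵐ x ∂μ, ι x.1 ≠ 0 := by
    rw [ae_iff]
    simpa only [not_not, map_eq_zero] using hμ0
  have hinj : ∀ᵐ x ∂μ, (g x).Injective := by
    filter_upwards [hunit] with x hx u v h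
    exact mul_left_cancel₀ hx (add_right_cancel h)
  obtain ⟨z₁, hmax⟩ := ν.exists_forall_measure_singleton_le hz₀
  have hm : ν {z₁} ≠ 0 := ne_bot_of_le_ne_bot hz₀ (hmax z₀)
  have hS := (ν.finite_setOf_le_measure_singleton hm).subset
    fun w (hw : ν {w} = ν {z₁}) => hw.ge
  have hperm := ae_image_setOf_measure_singleton_eq
    (fun z => measure_eq_lintegral_measure_preimage
      (fun x => (continuous_const_mul _).add continuous_const |>.measurable) hstat
      (measurableSet_singleton z)) hinj hm hmax
  set s := hS.toFinset
  have hcard : (s.card : K) ≠ 0 := by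
    rw [← map_natCast ι, map_ne_zero, Nat.cast_ne_zero, Finset.card_ne_zero]
    exact ⟨z₁, hS.mem_toFinset.mpr rfl⟩
  have hfix : ∀ᵐ x ∂μ, IsFixedPt (g x) ((∑ w ∈ s, w) / s.card) := by
    filter_upwards [hperm, hunit] with x hx hx0
    refine Finset.isFixedPt_sum_div_card_of_image_eq hcard hx0 ?_
    rw [← Finset.coe_inj, Finset.coe_image, hS.coe_toFinset]
    exact hx
  have hfull : ∀ {P : ℚ × ℚ → Prop}, (∀ᵐ x ∂μ, P x) → μ {x | P x} = 1 := fun h => by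
    rw [(ae_iff_measure_eq MeasurableSet.of_discrete.nullMeasurableSet).mp h, measure_univ]
  rcases ae_fst_eq_one_or_exists_ae_isFixedPt ι hfix with h₁ | ⟨t, ht⟩
  · exact (hfull h₁).not_lt hnondeg₁
  · exact (hfull ht).not_lt (hnondeg₂ t)

/-- Let `K` be a complete normed field realizing a place of `ℚ`
(a prime `p` or `p = ∞`), i.e. `ℚ_p` or `ℝ`.  Let `μ` be a nondegenerate probability
measure on `ℚ* × ℚ` (modelled as a probability measure on `ℚ × ℚ` giving no mass to
`{a = 0}`, with `μ({a = 1}) < 1` and `μ({(a,b) : a z + b = z}) < 1` for every `z ∈ ℚ`).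
If `ν` is a `μ`-stationary probability measure on `ℚ_p`
(`∫ f dν = ∫∫ f(a z + b) dμ(a,b) dν(z)` for every bounded Borel `f`),
then `ν` has no atoms: `ν({z}) = 0` for every `z ∈ ℚ_p`. -/
theorem statement4
    {K : Type*} [NormedField K] [CompleteSpace K] [MeasurableSpace K] [BorelSpace K]
    (ι : ℚ →+* K) (hdense : DenseRange ι)
    (hplace : (∀ q : ℚ, ‖ι q‖ = |(q : ℝ)|) ∨
      ∃ p : ℕ, p.Prime ∧ ∀ q : ℚ, ‖ι q‖ = (padicNorm p q : ℝ))
    (μ : Measure (ℚ × ℚ)) [IsProbabilityMeasure μ]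
    (hμ0 : μ {x | x.1 = 0} = 0)
    (hnondeg₁ : μ {x | x.1 = 1} < 1)
    (hnondeg₂ : ∀ z : ℚ, μ {x | x.1 * z + x.2 = z} < 1)
    (ν : Measure K) [IsProbabilityMeasure ν]
    (hstat : ∀ f : K → ℝ, Measurable f → (∃ C, ∀ x, |f x| ≤ C) →
      ∫ z, f z ∂ν = ∫ x, ∫ z, f (ι x.1 * z + ι x.2) ∂ν ∂μ) :
    ∀ z : K, ν {z} = 0 :=
  statement4_general ι μ hμ0 hnondeg₁ hnondeg₂ ν hstat
end

section
/- For all g₁ = (a₁,b₁) and g₂ = (a₂,b₂) in ℚ* × ℚ, the adelic length of the affine product g₁g₂ = (a₁a₂, a₁b₂ + b₁) satisfies ‖g₁g₂‖ ≤ log 2 + 2‖g₁‖ + ‖g₂‖. -/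
/-- `⟨q⟩ = Σ_{p prime} |log |q|_p|` (a finite sum, expressed as a `tsum` over primes). -/
noncomputable def nad (q : ℚ) : ℝ :=
  ∑' p : Nat.Primes, |Real.log (padicNorm p.1 q : ℝ)|

/-- The height `⟨b⟩⁺ = log⁺ |b|_∞ + Σ_{p prime} log⁺ |b|_p`, where `log⁺ t = max (log t) 0`
(and `⟨0⟩⁺ = 0`, automatic from `Real.log 0 = 0`). -/
noncomputable def nadPlus (q : ℚ) : ℝ :=
  max (Real.log |(q : ℝ)|) 0 + ∑' p : Nat.Primes, max (Real.log (padicNorm p.1 q : ℝ)) 0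

/-- The adelic length `‖(a,b)‖ = ⟨a⟩ + ⟨b⟩⁺` of an affinity `(a,b) ∈ ℚ* × ℚ`. -/
noncomputable def adLength (g : ℚ × ℚ) : ℝ := nad g.1 + nadPlus g.2

/-!
The height `⟨b⟩⁺` satisfies the usual inequalities `⟨xy⟩⁺ ≤ ⟨x⟩⁺ + ⟨y⟩⁺` and
`⟨x + y⟩⁺ ≤ log 2 + ⟨x⟩⁺ + ⟨y⟩⁺`, the `log 2` coming only from the archimedean place since the
primes are ultrametric; similarly `⟨xy⟩ ≤ ⟨x⟩ + ⟨y⟩` place by place. Writing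
`|log t| = log⁺ t + log⁺ t⁻¹`, the product formula `log |a|_∞ = Σ_p log |a|_p⁻¹` gives
`⟨a⟩⁺ ≤ ⟨a⟩`. Hence
`‖g₁g₂‖ ≤ ⟨a₁⟩ + ⟨a₂⟩ + log 2 + ⟨a₁⟩⁺ + ⟨b₂⟩⁺ + ⟨b₁⟩⁺ ≤ log 2 + 2‖g₁‖ + ‖g₂‖`.
-/

open Real

local instance (p : Nat.Primes) : Fact p.1.Prime := ⟨p.2⟩

lemma Real.abs_log_eq_posLog_add_posLog_inv (x : ℝ) : |log x| = log⁺ x + log⁺ x⁻¹ := by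
  linarith [posLog_sub_posLog_inv (x := x), half_mul_log_add_log_abs (x := x)]

lemma Real.abs_log_mul_le (x y : ℝ) : |log (x * y)| ≤ |log x| + |log y| := by
  rcases eq_or_ne x 0 with rfl | hx
  · simp
  rcases eq_or_ne y 0 with rfl | hy
  · simp
  rw [log_mul hx hy]
  exact abs_add_le _ _

lemma Real.posLog_max_le (x y : ℝ) :
    log⁺ (max x y) ≤ log⁺ x + log⁺ y := by
  rcases max_choice x y with h | h <;> rw [h]
  · linarith [posLog_nonneg (x := y)]
  · linarith [posLog_nonneg (x := x)]

namespace padicNorm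

lemma finite_setOf_ne_one {q : ℚ} (hq : q ≠ 0) : {p : Nat.Primes | padicNorm p q ≠ 1}.Finite := by
  set n := q.num.natAbs * q.den
  have hn : n ≠ 0 := mul_ne_zero (Int.natAbs_ne_zero.2 (Rat.num_ne_zero.2 hq)) q.den_nz
  refine (n.divisors.finite_toSet.preimage Nat.Primes.coe_nat_injective.injOn).subset
    fun (p : Nat.Primes) hp => Nat.mem_divisors.2 ⟨?_, hn⟩
  by_contra hpn
  have hnum : ¬ (p : ℤ) ∣ q.num := fun h => hpn (Int.natCast_dvd.1 h |>.mul_right _)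
  have hden : ¬ p.1 ∣ q.den := fun h => hpn (h.mul_left _)
  apply hp
  rw [← Rat.num_div_den q, padicNorm.div, (int_eq_one_iff _).2 hnum,
    (nat_eq_one_iff _).2 hden, div_one]

lemma summable_comp (q : ℚ) {F : ℝ → ℝ} (h0 : F 0 = 0) (h1 : F 1 = 0) :
    Summable fun p : Nat.Primes => F (padicNorm p q) := by
  rcases eq_or_ne q 0 with rfl | hq
  · simp [h0]
  exact summable_of_hasFiniteSupport <|
    (finite_setOf_ne_one hq).subset fun p hp h => hp (by simp [h, h1])

lemma summable_abs_log (q : ℚ) : Summable fun p : Nat.Primes => |log (padicNorm p q : ℝ)| :=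
  summable_comp q (F := fun t => |log t|) (by simp) (by simp)

lemma summable_posLog (q : ℚ) : Summable fun p : Nat.Primes => log⁺ (padicNorm p q) :=
  summable_comp q posLog_zero posLog_one

lemma summable_posLog_inv (q : ℚ) : Summable fun p : Nat.Primes => log⁺ (padicNorm p q : ℝ)⁻¹ :=
  summable_comp q (F := fun t => log⁺ t⁻¹) (by simp) (by simp)

lemma tsum_posLog_le_of_le {x y z : ℚ}
    (h : ∀ p : Nat.Primes, log⁺ (padicNorm p z) ≤ log⁺ (padicNorm p x) + log⁺ (padicNorm p y)) :
    ∑' p : Nat.Primes, log⁺ (padicNorm p z) ≤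
      ∑' p : Nat.Primes, log⁺ (padicNorm p x) + ∑' p : Nat.Primes, log⁺ (padicNorm p y) := by
  rw [← (summable_posLog x).tsum_add (summable_posLog y)]
  exact (summable_posLog z).tsum_le_tsum h ((summable_posLog x).add (summable_posLog y))

end padicNorm

lemma tsum_log_padicNorm_mul {x y : ℚ} (hx : x ≠ 0) (hy : y ≠ 0) :
    ∑' p : Nat.Primes, log (padicNorm p (x * y)) =
      ∑' p : Nat.Primes, log (padicNorm p x) + ∑' p : Nat.Primes, log (padicNorm p y) := by
  rw [← (padicNorm.summable_comp x log_zero log_one).tsum_add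
    (padicNorm.summable_comp y log_zero log_one)]
  refine tsum_congr fun p => ?_
  rw [padicNorm.mul, Rat.cast_mul, log_mul (by exact_mod_cast padicNorm.nonzero hx)
    (by exact_mod_cast padicNorm.nonzero hy)]

lemma tsum_log_padicNorm_natCast (n : ℕ) :
    ∑' p : Nat.Primes, log (padicNorm p n) = -log n := by
  induction n using Nat.recOnMul with
  | zero => simp
  | one => simp
  | prime q hq =>
    have : Fact q.Prime := ⟨hq⟩
    rw [tsum_eq_single ⟨q, hq⟩ fun p hp => ?_]
    · simp [padicNorm.padicNorm_p_of_prime]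
    · rw [padicNorm.padicNorm_of_prime_of_ne fun h => hp (Subtype.ext h)]
      simp
  | mul a b iha ihb =>
    rcases eq_or_ne a 0 with rfl | ha
    · simp
    rcases eq_or_ne b 0 with rfl | hb
    · simp
    rw [Nat.cast_mul, tsum_log_padicNorm_mul (by exact_mod_cast ha) (by exact_mod_cast hb),
      iha, ihb, Nat.cast_mul, log_mul (by exact_mod_cast ha) (by exact_mod_cast hb)]
    ring

lemma tsum_log_padicNorm_intCast (z : ℤ) :
    ∑' p : Nat.Primes, log (padicNorm p z) = -log z := by
  obtain ⟨n, rfl | rfl⟩ := Int.eq_nat_or_neg z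
  · exact_mod_cast tsum_log_padicNorm_natCast n
  · simpa [padicNorm.neg] using tsum_log_padicNorm_natCast n

-- At `q = 0` both sides vanish because `log 0 = 0`.
theorem tsum_log_padicNorm (q : ℚ) :
    ∑' p : Nat.Primes, log (padicNorm p q) = -log q := by
  rcases eq_or_ne q 0 with rfl | hq
  · simp
  have hden : (q.den : ℚ) ≠ 0 := by exact_mod_cast q.den_nz
  have h := tsum_log_padicNorm_mul hq hden
  rw [Rat.mul_den_eq_num, tsum_log_padicNorm_intCast, tsum_log_padicNorm_natCast] at h
  have hq' : (q : ℝ) = q.num / q.den := by exact_mod_cast (Rat.num_div_den q).symm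
  rw [hq', log_div (by exact_mod_cast Rat.num_ne_zero.2 hq) (by exact_mod_cast q.den_nz)]
  linarith

open padicNorm

lemma nad_eq_tsum_posLog_add_tsum_posLog_inv (q : ℚ) :
    nad q = ∑' p : Nat.Primes, log⁺ (padicNorm p q) +
      ∑' p : Nat.Primes, log⁺ (padicNorm p q : ℝ)⁻¹ := by
  rw [nad, ← (summable_posLog q).tsum_add (summable_posLog_inv q)]
  exact tsum_congr fun p => abs_log_eq_posLog_add_posLog_inv _

lemma nadPlus_eq_posLog_add_tsum_posLog (q : ℚ) :
    nadPlus q = log⁺ q + ∑' p : Nat.Primes, log⁺ (padicNorm p q) := by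
  simp only [nadPlus, max_comm _ (0 : ℝ), ← posLog_apply, posLog_abs]

lemma nadPlus_nonneg (q : ℚ) : 0 ≤ nadPlus q :=
  add_nonneg (le_max_right _ _) (tsum_nonneg fun _ => le_max_right _ _)

lemma posLog_le_tsum_posLog_inv_padicNorm (q : ℚ) :
    log⁺ q ≤ ∑' p : Nat.Primes, log⁺ (padicNorm p q : ℝ)⁻¹ := by
  refine max_le (tsum_nonneg fun _ => posLog_nonneg) ?_
  calc log q = ∑' p : Nat.Primes, log (padicNorm p q : ℝ)⁻¹ := by
        simp only [log_inv, tsum_neg, tsum_log_padicNorm, neg_neg]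
    _ ≤ _ := (summable_comp q (F := fun t => log t⁻¹) (by simp) (by simp)).tsum_le_tsum
        (fun _ => le_max_right _ _) (summable_posLog_inv q)

lemma nadPlus_le_nad (q : ℚ) : nadPlus q ≤ nad q := by
  rw [nadPlus_eq_posLog_add_tsum_posLog, nad_eq_tsum_posLog_add_tsum_posLog_inv]
  linarith [posLog_le_tsum_posLog_inv_padicNorm q]

lemma nad_mul_le (x y : ℚ) : nad (x * y) ≤ nad x + nad y := by
  rw [nad, nad, nad, ← (summable_abs_log x).tsum_add (summable_abs_log y)]
  refine (summable_abs_log _).tsum_le_tsum (fun p => ?_)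
    ((summable_abs_log x).add (summable_abs_log y))
  rw [padicNorm.mul, Rat.cast_mul]
  exact abs_log_mul_le _ _

lemma nadPlus_mul_le (x y : ℚ) : nadPlus (x * y) ≤ nadPlus x + nadPlus y := by
  simp only [nadPlus_eq_posLog_add_tsum_posLog]
  have h : ∑' p : Nat.Primes, log⁺ (padicNorm p (x * y)) ≤
      ∑' p : Nat.Primes, log⁺ (padicNorm p x) + ∑' p : Nat.Primes, log⁺ (padicNorm p y) :=
    tsum_posLog_le_of_le fun p => by
      rw [padicNorm.mul, Rat.cast_mul]
      exact posLog_mul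
  push_cast
  linarith [posLog_mul (x := (x : ℝ)) (y := y)]

lemma nadPlus_add_le (x y : ℚ) : nadPlus (x + y) ≤ log 2 + nadPlus x + nadPlus y := by
  simp only [nadPlus_eq_posLog_add_tsum_posLog]
  have h : ∑' p : Nat.Primes, log⁺ (padicNorm p (x + y)) ≤
      ∑' p : Nat.Primes, log⁺ (padicNorm p x) + ∑' p : Nat.Primes, log⁺ (padicNorm p y) :=
    tsum_posLog_le_of_le fun p => by
      refine (posLog_le_posLog (by exact_mod_cast padicNorm.nonneg _) ?_).trans (posLog_max_le _ _)
      exact_mod_cast padicNorm.nonarchimedean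
  push_cast
  linarith [posLog_add (x := (x : ℝ)) (y := y)]

theorem statement11_general (a₁ b₁ a₂ b₂ : ℚ) :
    adLength (a₁ * a₂, a₁ * b₂ + b₁) ≤
      Real.log 2 + 2 * adLength (a₁, b₁) + adLength (a₂, b₂) := by
  have hb : nadPlus (a₁ * b₂ + b₁) ≤ log 2 + (nadPlus a₁ + nadPlus b₂) + nadPlus b₁ :=
    (nadPlus_add_le _ _).trans (by gcongr; exact nadPlus_mul_le _ _)
  simp only [adLength]
  linarith [nad_mul_le a₁ a₂, nadPlus_le_nad a₁, nadPlus_nonneg b₁]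

/-- For `g₁ = (a₁,b₁)`, `g₂ = (a₂,b₂)` in `ℚ* × ℚ`, composed as affine
maps `g₁g₂ = (a₁a₂, a₁b₂ + b₁)`, the adelic length satisfies
`‖g₁g₂‖ ≤ log 2 + 2‖g₁‖ + ‖g₂‖`. -/
theorem statement11 (a₁ b₁ a₂ b₂ : ℚ) (ha₁ : a₁ ≠ 0) (ha₂ : a₂ ≠ 0) :
    adLength (a₁ * a₂, a₁ * b₂ + b₁) ≤
      Real.log 2 + 2 * adLength (a₁, b₁) + adLength (a₂, b₂) :=
  statement11_general a₁ b₁ a₂ b₂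
end

section
/- Let (ξ_k, η_k)_{k≥1} be an i.i.d. sequence of pairs of real random variables such that ξ₁ is integrable with mean φ = E[ξ₁] and the positive part η₁⁺ is integrable. Set S_k = ξ₁ + ⋯ + ξ_k. Then the sequence (1/n)·max_{1≤k≤n} (S_k + η_k)⁺ converges to φ⁺ = max(φ, 0) both almost surely and in L¹ as n → ∞. -/
/-!
Upper bound: `(S_k + η_k)⁺ ≤ S_k⁺ + η_k⁺`, and for a nonnegative sequence with `v_k / k → M`
the running maximum satisfies `max_{k<n} v_k / n → M` as well; by the strong law
`S_k / k → φ`, and `η_k⁺ / k → 0` because the averages of `η_k⁺` converge.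

Lower bound: `η_k` may be very negative, so fix a level `c` with `P(η ≥ c) > 0`. The strong law
for the indicators of `{η_k ≥ c}` shows that for every `r < 1` the window `[r n, n)` eventually
contains an index `k` with `η_k ≥ c`, and there `S_{k+1} + η_k ≳ φ r n + c`.

L¹ convergence follows from Vitali's theorem: the maximum is dominated by the average of the
i.i.d. integrable variables `|ξ_i| + η_i⁺`, and such averages are uniformly integrable.
-/

open MeasureTheory ProbabilityTheory Filter Topology Finset

theorem tendsto_div_succ_of_tendsto_average {v : ℕ → ℝ} {m : ℝ}
    (h : Tendsto (fun n : ℕ => (∑ k ∈ range n, v k) / n) atTop (𝓝 m)) :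
    Tendsto (fun n : ℕ => v n / (n + 1)) atTop (𝓝 0) := by
  have h_succ : Tendsto (fun n : ℕ => (∑ k ∈ range (n + 1), v k) / (n + 1 : ℕ)) atTop (𝓝 m) :=
    (tendsto_add_atTop_iff_nat 1).2 h
  have h_rescaled := h.mul (tendsto_natCast_div_add_atTop (1 : ℝ))
  rw [mul_one] at h_rescaled
  refine (sub_self m ▸ h_succ.sub h_rescaled).congr fun n => ?_
  rcases Nat.eq_zero_or_pos n with rfl | hn
  · simp
  · rw [sum_range_succ]
    push_cast
    field_simp
    ring

theorem tendsto_iSup_div_of_tendsto_div_succ {v : ℕ → ℝ} {M : ℝ} (hv : ∀ k, 0 ≤ v k)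
    (h : Tendsto (fun k : ℕ => v k / (k + 1)) atTop (𝓝 M)) :
    Tendsto (fun n : ℕ => (⨆ k : Fin n, v k) / n) atTop (𝓝 M) := by
  have hM : 0 ≤ M := ge_of_tendsto' h fun k => div_nonneg (hv k) (by positivity)
  rw [← tendsto_add_atTop_iff_nat 1, tendsto_order]
  push_cast
  refine ⟨fun b hb => ?_, fun b hb => ?_⟩
  · filter_upwards [h.eventually (lt_mem_nhds hb)] with n hn
    refine hn.trans_le (div_le_div_of_nonneg_right ?_ (by positivity))
    exact Finite.le_ciSup_of_le (f := fun k : Fin (n + 1) => v k) (Fin.last n) le_rfl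
  · obtain ⟨a, hMa, hab⟩ := exists_between hb
    obtain ⟨K, hK⟩ := eventually_atTop.1 (h.eventually (gt_mem_nhds hMa))
    set C := ∑ k ∈ range K, v k
    have hC : 0 ≤ C := sum_nonneg fun k _ => hv k
    have hbound : ∀ k : ℕ, v k ≤ C + a * (k + 1) := by
      intro k
      rcases lt_or_ge k K with hk | hk
      · have := single_le_sum (fun i _ => hv i) (mem_range.2 hk)
        nlinarith
      · have := hK k hk
        rw [div_lt_iff₀ (by positivity)] at this
        linarith
    have hlim : Tendsto (fun n : ℕ => C / ((n : ℝ) + 1) + a) atTop (𝓝 (0 + a)) :=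
      (tendsto_const_nhds.div_atTop
        (tendsto_natCast_atTop_atTop.atTop_add tendsto_const_nhds)).add_const a
    filter_upwards [hlim.eventually (gt_mem_nhds (show 0 + a < b by linarith))] with n hn
    refine lt_of_le_of_lt ?_ hn
    rw [div_add' _ _ _ (by positivity), div_le_div_iff_of_pos_right (by positivity)]
    refine Real.iSup_le (fun k => ?_) (by nlinarith)
    have hk : (k : ℝ) + 1 ≤ n + 1 := by exact_mod_cast k.2
    nlinarith [hbound k]

theorem eventually_exists_ne_zero_of_tendsto_average {v : ℕ → ℝ} {p r : ℝ} (hp : p ≠ 0)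
    (hr₀ : 0 < r) (hr₁ : r < 1)
    (h : Tendsto (fun n : ℕ => (∑ k ∈ range n, v k) / n) atTop (𝓝 p)) :
    ∀ᶠ n : ℕ in atTop, ∃ k : ℕ, r * n ≤ k ∧ k < n ∧ v k ≠ 0 := by
  set m : ℕ → ℕ := fun n => ⌈r * n⌉₊
  have hm_le (n : ℕ) : m n ≤ n := Nat.ceil_le.2 (by nlinarith [(n.cast_nonneg : (0 : ℝ) ≤ n)])
  have hm_top : Tendsto m atTop atTop :=
    tendsto_nat_ceil_atTop.comp (tendsto_natCast_atTop_atTop.const_mul_atTop hr₀)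
  have hm_ratio : Tendsto (fun n : ℕ => (m n : ℝ) / n) atTop (𝓝 r) :=
    (tendsto_nat_ceil_mul_div_atTop hr₀.le).comp tendsto_natCast_atTop_atTop
  have h_head : Tendsto (fun n : ℕ => (∑ k ∈ range (m n), v k) / n) atTop (𝓝 (p * r)) := by
    refine ((h.comp hm_top).mul hm_ratio).congr fun n => ?_
    rcases eq_or_ne (m n) 0 with hmn | hmn
    · simp [hmn]
    · exact div_mul_div_cancel₀ (Nat.cast_ne_zero.2 hmn)
  have h_tail_ne : p - p * r ≠ 0 := by
    rw [← mul_one_sub]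
    exact mul_ne_zero hp (sub_ne_zero.2 hr₁.ne')
  filter_upwards [(h.sub h_head).eventually_ne h_tail_ne] with n hn
  rw [← sum_range_add_sum_Ico _ (hm_le n), add_div, add_sub_cancel_left] at hn
  obtain ⟨k, hk, hvk⟩ := exists_ne_zero_of_sum_ne_zero (left_ne_zero_of_mul hn)
  rw [mem_Ico] at hk
  exact ⟨k, (Nat.le_ceil _).trans (by exact_mod_cast hk.1), hk.2, hvk⟩

theorem iSup_max_add_le (s e : ℕ → ℝ) (n : ℕ) :
    ⨆ k : Fin n, max (s k + e k) 0 ≤ (⨆ k : Fin n, max (s k) 0) + ⨆ k : Fin n, max (e k) 0 := by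
  have hs_nonneg : 0 ≤ ⨆ k : Fin n, max (s k) 0 := Real.iSup_nonneg fun _ => le_max_right _ _
  have he_nonneg : 0 ≤ ⨆ k : Fin n, max (e k) 0 := Real.iSup_nonneg fun _ => le_max_right _ _
  refine Real.iSup_le (fun k => max_le (add_le_add ?_ ?_) (by positivity)) (by positivity)
  · exact (le_max_left _ _).trans (Finite.le_ciSup (fun k : Fin n => max (s k) 0) k)
  · exact (le_max_left _ _).trans (Finite.le_ciSup (fun k : Fin n => max (e k) 0) k)

theorem eventually_lt_iSup_max_add_div {s e : ℕ → ℝ} {φ b c : ℝ}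
    (hs : Tendsto (fun k : ℕ => s k / (k + 1)) atTop (𝓝 φ)) (hb₀ : 0 ≤ b) (hb : b < φ)
    (he : ∀ r : ℝ, 0 < r → r < 1 → ∀ᶠ n : ℕ in atTop, ∃ k : ℕ, r * n ≤ k ∧ k < n ∧ c ≤ e k) :
    ∀ᶠ n : ℕ in atTop, b < (⨆ k : Fin n, max (s k + e k) 0) / n := by
  obtain ⟨a, hba, haφ⟩ := exists_between hb
  have ha : 0 < a := hb₀.trans_lt hba
  obtain ⟨r, hbr, hr₁⟩ := exists_between ((div_lt_one ha).2 hba)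
  have hr₀ : 0 < r := (div_nonneg hb₀ ha.le).trans_lt hbr
  rw [div_lt_iff₀' ha] at hbr
  obtain ⟨K, hK⟩ := eventually_atTop.1 (hs.eventually (lt_mem_nhds haφ))
  have hlim : Tendsto (fun n : ℕ => a * r + c / n) atTop (𝓝 (a * r + 0)) :=
    (tendsto_const_div_atTop_nhds_zero_nat c).const_add _
  filter_upwards [he r hr₀ hr₁, hlim.eventually (lt_mem_nhds (by rwa [add_zero])),
    (tendsto_natCast_atTop_atTop.const_mul_atTop hr₀).eventually_ge_atTop (K : ℝ)]
    with n ⟨k, hrk, hkn, hck⟩ hbn hKn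
  have hn : (0 : ℝ) < n := by exact_mod_cast (Nat.zero_le k).trans_lt hkn
  have hsk : a * (k + 1) < s k := by
    have := hK k (by exact_mod_cast hKn.trans hrk)
    rwa [lt_div_iff₀ (by positivity)] at this
  rw [lt_div_iff₀ hn]
  calc b * n < (a * r + c / n) * n := by gcongr
    _ = a * (r * n) + c := by field_simp
    _ ≤ s k + e k := by nlinarith
    _ ≤ ⨆ k : Fin n, max (s k + e k) 0 :=
      (le_max_left _ _).trans (Finite.le_ciSup (fun k : Fin n => max (s k + e k) 0) ⟨k, hkn⟩)

theorem tendsto_iSup_max_add_div {s e : ℕ → ℝ} {φ μ c : ℝ}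
    (hs : Tendsto (fun k : ℕ => s k / (k + 1)) atTop (𝓝 φ))
    (he_avg : Tendsto (fun n : ℕ => (∑ k ∈ range n, max (e k) 0) / n) atTop (𝓝 μ))
    (he : ∀ r : ℝ, 0 < r → r < 1 → ∀ᶠ n : ℕ in atTop, ∃ k : ℕ, r * n ≤ k ∧ k < n ∧ c ≤ e k) :
    Tendsto (fun n : ℕ => (⨆ k : Fin n, max (s k + e k) 0) / n) atTop (𝓝 (max φ 0)) := by
  have hs_pos : Tendsto (fun n : ℕ => (⨆ k : Fin n, max (s k) 0) / n) atTop (𝓝 (max φ 0)) := by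
    refine tendsto_iSup_div_of_tendsto_div_succ (v := fun k => max (s k) 0)
      (fun _ => le_max_right _ _) ?_
    refine (hs.max tendsto_const_nhds).congr fun k => ?_
    rw [← max_div_div_right (by positivity), zero_div]
  have he_pos : Tendsto (fun n : ℕ => (⨆ k : Fin n, max (e k) 0) / n) atTop (𝓝 0) :=
    tendsto_iSup_div_of_tendsto_div_succ (v := fun k => max (e k) 0) (fun _ => le_max_right _ _)
      (tendsto_div_succ_of_tendsto_average he_avg)
  rw [tendsto_order]
  refine ⟨fun b hb => ?_, fun b hb => ?_⟩
  · rcases lt_or_ge b 0 with hb₀ | hb₀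
    · exact Eventually.of_forall fun n =>
        hb₀.trans_le (div_nonneg (Real.iSup_nonneg fun _ => le_max_right _ _) n.cast_nonneg)
    · exact eventually_lt_iSup_max_add_div hs hb₀ ((lt_max_iff.1 hb).resolve_right hb₀.not_gt) he
  · have h_sum := hs_pos.add he_pos
    rw [add_zero] at h_sum
    filter_upwards [h_sum.eventually (gt_mem_nhds hb)] with n hn
    rw [← add_div] at hn
    exact (div_le_div_of_nonneg_right (iSup_max_add_le s e n) n.cast_nonneg).trans_lt hn

theorem iSup_max_sum_add_le_sum (x y : ℕ → ℝ) (n : ℕ) :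
    ⨆ k : Fin n, max (∑ i ∈ range (k + 1), x i + y k) 0 ≤
      ∑ i ∈ range n, (|x i| + max (y i) 0) := by
  have hsum_nonneg : 0 ≤ ∑ i ∈ range n, (|x i| + max (y i) 0) :=
    sum_nonneg fun i _ => add_nonneg (abs_nonneg _) (le_max_right _ _)
  refine Real.iSup_le (fun k => max_le ?_ hsum_nonneg) hsum_nonneg
  rw [sum_add_distrib]
  gcongr
  · calc ∑ i ∈ range (k + 1), x i ≤ ∑ i ∈ range (k + 1), |x i| :=
          sum_le_sum fun i _ => le_abs_self _
      _ ≤ ∑ i ∈ range n, |x i| :=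
          sum_le_sum_of_subset_of_nonneg (range_subset_range.2 k.2) fun i _ _ => abs_nonneg _
  · exact (le_max_left _ _).trans
      (single_le_sum (f := fun i => max (y i) 0) (fun i _ => le_max_right _ _) (mem_range.2 k.2))

theorem exists_measure_setOf_le_ne_zero {α : Type*} [MeasurableSpace α] (μ : Measure α)
    [NeZero μ] (f : α → ℝ) : ∃ c : ℝ, μ {x | c ≤ f x} ≠ 0 := by
  by_contra! h
  refine NeZero.ne μ (Measure.measure_univ_eq_zero.1 (measure_mono_null (fun x _ => ?_)
    (measure_iUnion_null fun j : ℕ => h (-j))))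
  obtain ⟨j, hj⟩ := exists_nat_ge (-f x)
  exact Set.mem_iUnion.2 ⟨j, neg_le.1 hj⟩

theorem MeasureTheory.UnifIntegrable.of_norm_le {ι α β γ : Type*} [MeasurableSpace α]
    {μ : Measure α} [NormedAddCommGroup β] [NormedAddCommGroup γ] {p : ENNReal}
    {f : ι → α → β} {g : ι → α → γ} (hf : UnifIntegrable f p μ)
    (hgf : ∀ i, ∀ᵐ x ∂μ, ‖g i x‖ ≤ ‖f i x‖) : UnifIntegrable g p μ := by
  intro ε hε
  obtain ⟨δ, hδ, hfδ⟩ := hf hε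
  refine ⟨δ, hδ, fun i s hs hμs => (eLpNorm_mono_ae ?_).trans (hfδ i s hs hμs)⟩
  filter_upwards [hgf i] with x hx
  by_cases hxs : x ∈ s <;> simp [hxs, hx]

theorem tendsto_integral_norm_sub_of_unifIntegrable {α E : Type*} [MeasurableSpace α]
    {μ : Measure α} [IsFiniteMeasure μ] [NormedAddCommGroup E] {f : ℕ → α → E} {g : α → E}
    (hf : ∀ n, AEStronglyMeasurable (f n) μ) (hg : Integrable g μ) (hui : UnifIntegrable f 1 μ)
    (hfg : ∀ᵐ x ∂μ, Tendsto (fun n => f n x) atTop (𝓝 (g x))) :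
    Tendsto (fun n => ∫ x, ‖f n x - g x‖ ∂μ) atTop (𝓝 0) := by
  have h := (ENNReal.tendsto_toReal ENNReal.zero_ne_top).comp <|
    tendsto_Lp_finite_of_tendsto_ae le_rfl ENNReal.one_ne_top hf (memLp_one_iff_integrable.2 hg)
      hui hfg
  refine h.congr fun n => ?_
  rw [Function.comp_apply, toReal_eLpNorm ((hf n).sub hg.1),
    lpNorm_one_eq_integral_norm ((hf n).sub hg.1)]
  rfl

theorem strong_law_ae_comp {Ω β : Type*} {mΩ : MeasurableSpace Ω} {μ : Measure Ω}
    [MeasurableSpace β] {X : ℕ → Ω → β} (hindep : Pairwise fun i j => X i ⟂ᵢ[μ] X j)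
    (hident : ∀ n, IdentDistrib (X n) (X 0) μ μ) {g : β → ℝ} (hg : Measurable g)
    (hint : Integrable (fun ω => g (X 0 ω)) μ) :
    ∀ᵐ ω ∂μ, Tendsto (fun n : ℕ => (∑ k ∈ range n, g (X k ω)) / n) atTop
      (𝓝 (∫ ω, g (X 0 ω) ∂μ)) :=
  strong_law_ae_real (fun k ω => g (X k ω)) hint (fun _ _ hij => (hindep hij).comp hg hg)
    fun n => (hident n).comp hg

section RandomWalk

variable {Ω : Type*} {mΩ : MeasurableSpace Ω} {μ : Measure Ω} [IsProbabilityMeasure μ]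
  {X : ℕ → Ω → ℝ × ℝ}

theorem ae_tendsto_iSup_max_sum_add_div (hindep : Pairwise fun i j => X i ⟂ᵢ[μ] X j)
    (hident : ∀ n, IdentDistrib (X n) (X 0) μ μ) (hint₁ : Integrable (fun ω => (X 0 ω).1) μ)
    (hint₂ : Integrable (fun ω => max (X 0 ω).2 0) μ) :
    ∀ᵐ ω ∂μ, Tendsto (fun n : ℕ =>
        (⨆ k : Fin n, max (∑ i ∈ range (k + 1), (X i ω).1 + (X k ω).2) 0) / n)
      atTop (𝓝 (max (∫ ω, (X 0 ω).1 ∂μ) 0)) := by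
  have hX₀ : AEMeasurable (X 0) μ := (hident 0).aemeasurable_fst
  have := Measure.isProbabilityMeasure_map (μ := μ) hX₀
  obtain ⟨c, hc⟩ := exists_measure_setOf_le_ne_zero (μ.map (X 0)) Prod.snd
  set S : Set (ℝ × ℝ) := {q | c ≤ q.2}
  have hS : MeasurableSet S := measurableSet_le measurable_const measurable_snd
  have hS_int : Integrable (fun ω => S.indicator (1 : ℝ × ℝ → ℝ) (X 0 ω)) μ :=
    ((integrable_const (1 : ℝ)).indicator hS).comp_aemeasurable hX₀
  have hS_mean : ∫ ω, S.indicator (1 : ℝ × ℝ → ℝ) (X 0 ω) ∂μ ≠ 0 := by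
    rw [← integral_map hX₀ (measurable_one.indicator hS).aestronglyMeasurable,
      integral_indicator_one hS]
    exact (measureReal_ne_zero_iff (measure_ne_top _ _)).2 hc
  filter_upwards [strong_law_ae_comp hindep hident measurable_fst hint₁,
    strong_law_ae_comp hindep hident (measurable_snd.max measurable_const) hint₂,
    strong_law_ae_comp hindep hident (measurable_one.indicator hS) hS_int] with ω h₁ h₂ h₃
  refine tendsto_iSup_max_add_div (s := fun k => ∑ i ∈ range (k + 1), (X i ω).1)
    (e := fun k => (X k ω).2) (c := c) ?_ h₂ fun r hr₀ hr₁ => ?_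
  · have h₁' := (tendsto_add_atTop_iff_nat 1).2 h₁
    push_cast at h₁'
    exact h₁'
  · filter_upwards [eventually_exists_ne_zero_of_tendsto_average hS_mean hr₀ hr₁ h₃]
      with n ⟨k, hrk, hkn, hk⟩
    exact ⟨k, hrk, hkn, Set.mem_of_indicator_ne_zero (s := S) hk⟩

theorem tendsto_integral_abs_iSup_max_sum_add_div_sub
    (hident : ∀ n, IdentDistrib (X n) (X 0) μ μ) (hint₁ : Integrable (fun ω => (X 0 ω).1) μ)
    (hint₂ : Integrable (fun ω => max (X 0 ω).2 0) μ) {a : ℝ}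
    (hae : ∀ᵐ ω ∂μ, Tendsto (fun n : ℕ =>
        (⨆ k : Fin n, max (∑ i ∈ range (k + 1), (X i ω).1 + (X k ω).2) 0) / n) atTop (𝓝 a)) :
    Tendsto (fun n : ℕ =>
        ∫ ω, |(⨆ k : Fin n, max (∑ i ∈ range (k + 1), (X i ω).1 + (X k ω).2) 0) / n - a| ∂μ)
      atTop (𝓝 0) := by
  have hw : Measurable fun q : ℝ × ℝ => |q.1| + max q.2 0 :=
    measurable_fst.abs.add (measurable_snd.max measurable_const)
  have hW : UniformIntegrable (fun i ω => |(X i ω).1| + max (X i ω).2 0) 1 μ :=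
    MemLp.uniformIntegrable_of_identDistrib le_rfl ENNReal.one_ne_top
      (memLp_one_iff_integrable.2 (hint₁.abs.add hint₂)) fun i => (hident i).comp hw
  have hX (i : ℕ) : AEMeasurable (X i) μ := (hident i).aemeasurable_fst
  have hmeas (n : ℕ) : AEStronglyMeasurable (fun ω =>
      (⨆ k : Fin n, max (∑ i ∈ range (k + 1), (X i ω).1 + (X k ω).2) 0) / n) μ :=
    ((AEMeasurable.iSup fun k => by fun_prop).div_const _).aestronglyMeasurable
  refine tendsto_integral_norm_sub_of_unifIntegrable hmeas (integrable_const a)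
    ((uniformIntegrable_average le_rfl hW).unifIntegrable.of_norm_le
      fun n => ae_of_all _ fun ω => ?_) hae
  have hY_nonneg : 0 ≤ ⨆ k : Fin n, max (∑ i ∈ range (k + 1), (X i ω).1 + (X k ω).2) 0 :=
    Real.iSup_nonneg fun _ => le_max_right _ _
  simp only [Pi.smul_apply, Finset.sum_apply, smul_eq_mul, Real.norm_eq_abs]
  rw [abs_of_nonneg (by positivity), inv_mul_eq_div]
  exact (div_le_div_of_nonneg_right (iSup_max_sum_add_le_sum (fun i => (X i ω).1)
    (fun i => (X i ω).2) n) n.cast_nonneg).trans (le_abs_self _)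

end RandomWalk

theorem statement16_general
    {Ω : Type*} [MeasureSpace Ω] [IsProbabilityMeasure (ℙ : Measure Ω)]
    (ξ η : ℕ → Ω → ℝ)
    (hindep : iIndepFun (fun n ω => (ξ n ω, η n ω)) ℙ)
    (hident : ∀ n, IdentDistrib (fun ω => (ξ n ω, η n ω)) (fun ω => (ξ 0 ω, η 0 ω)) ℙ ℙ)
    (hIntξ : Integrable (ξ 0) ℙ)
    (hIntη : Integrable (fun ω => max (η 0 ω) 0) ℙ)
    (φ : ℝ) (hφ : φ = ∫ ω, ξ 0 ω ∂ℙ) :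
    (∀ᵐ ω ∂ℙ,
      Tendsto (fun n : ℕ =>
          (⨆ k : Fin n, max (∑ i ∈ Finset.range (k.1 + 1), ξ i ω + η k.1 ω) 0) / n)
        atTop (𝓝 (max φ 0))) ∧
    Tendsto (fun n : ℕ =>
        ∫ ω, |(⨆ k : Fin n, max (∑ i ∈ Finset.range (k.1 + 1), ξ i ω + η k.1 ω) 0) / n
          - max φ 0| ∂ℙ)
      atTop (𝓝 0) := by
  subst hφ
  have hae := ae_tendsto_iSup_max_sum_add_div (X := fun n ω => (ξ n ω, η n ω))
    (fun _ _ hij => hindep.indepFun hij) hident hIntξ hIntη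
  exact ⟨hae, tendsto_integral_abs_iSup_max_sum_add_div_sub hident hIntξ hIntη hae⟩

/-- Let `(ξ_k, η_k)_{k≥1}` be an i.i.d. sequence of pairs of real
random variables such that `ξ₁` is integrable with mean `φ = E[ξ₁]` and `η₁⁺` is
integrable.  With `S_k = ξ₁ + ⋯ + ξ_k`, the sequence `(1/n) max_{1≤k≤n} (S_k + η_k)⁺`
converges to `φ⁺ = max(φ, 0)` almost surely and in `L¹`.  (Here the maximum over
`1 ≤ k ≤ n` is expressed as `⨆ k : Fin n`, with `S_{k+1} = Σ_{i≤k} ξ_i` and the pair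
`(ξ, η)` of the same index.) -/
theorem statement16
    {Ω : Type*} [MeasureSpace Ω] [IsProbabilityMeasure (ℙ : Measure Ω)]
    (ξ η : ℕ → Ω → ℝ)
    (hmeas : ∀ n, Measurable fun ω => (ξ n ω, η n ω))
    (hindep : iIndepFun (fun n ω => (ξ n ω, η n ω)) ℙ)
    (hident : ∀ n, IdentDistrib (fun ω => (ξ n ω, η n ω)) (fun ω => (ξ 0 ω, η 0 ω)) ℙ ℙ)
    (hIntξ : Integrable (ξ 0) ℙ)
    (hIntη : Integrable (fun ω => max (η 0 ω) 0) ℙ)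
    (φ : ℝ) (hφ : φ = ∫ ω, ξ 0 ω ∂ℙ) :
    (∀ᵐ ω ∂ℙ,
      Tendsto (fun n : ℕ =>
          (⨆ k : Fin n, max (∑ i ∈ Finset.range (k.1 + 1), ξ i ω + η k.1 ω) 0) / n)
        atTop (𝓝 (max φ 0))) ∧
    Tendsto (fun n : ℕ =>
        ∫ ω, |(⨆ k : Fin n, max (∑ i ∈ Finset.range (k.1 + 1), ξ i ω + η k.1 ω) 0) / n
          - max φ 0| ∂ℙ)
      atTop (𝓝 0) :=
  statement16_general ξ η hindep hident hIntξ hIntη φ hφ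
end
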